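/- arXiv:2207.10889 — 11 statements merged into one kernel-verified Lean document; each statement's English description precedes it below -/
import Mathlib

section
/- Let G be a finite simple graph on a vertex set V, and for each vertex u let deg(u) denote its degree and N(u) its set of neighbors. Then Σ_{u ∈ V} (max_{w ∈ N(u)} deg(w)) ≥ Σ_{u ∈ V} deg(u), where the maximum over an empty neighborhood is taken to be 0. -/
/-!
Each vertex `u` with `deg u > 0` satisfies `max_{w ∈ N(u)} deg w ≥ (1 / deg u) ∑_{w ∈ N(u)} deg w`.
Summing over `u` and grouping the terms by edges, the right-hand sides add up to
`∑_{uw ∈ E} (deg w / deg u + deg u / deg w) ≥ ∑_{uw ∈ E} 2 = ∑_u deg u`.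
-/

open Finset

lemma two_le_div_add_div {K : Type*} [Field K] [LinearOrder K] [IsStrictOrderedRing K] {a b : K}
    (ha : 0 < a) (hb : 0 < b) : 2 ≤ a / b + b / a := by
  rw [div_add_div _ _ hb.ne' ha.ne', le_div_iff₀ (by positivity)]
  nlinarith [sq_nonneg (a - b)]

lemma sum_div_card_le_sup {α : Type*} (s : Finset α) (f : α → ℕ) :
    (∑ x ∈ s, (f x : ℚ)) / #s ≤ s.sup f := by
  refine div_le_of_le_mul₀ (by positivity) (by positivity) ?_
  rw [mul_comm, ← nsmul_eq_mul]
  exact sum_le_card_nsmul s _ _ fun x hx => Nat.cast_le.mpr (le_sup hx)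

namespace SimpleGraph

variable {V : Type*} [Fintype V] (G : SimpleGraph V) [DecidableRel G.Adj]

lemma sum_sum_neighborFinset_swap {M : Type*} [AddCommMonoid M] (f : V → V → M) :
    ∑ u, ∑ w ∈ G.neighborFinset u, f u w = ∑ u, ∑ w ∈ G.neighborFinset u, f w u :=
  Finset.sum_comm' fun u w => by simp [adj_comm, and_comm]

lemma sum_degree_le_sum_sum_degree_div :
    ∑ u, (G.degree u : ℚ) ≤ ∑ u, ∑ w ∈ G.neighborFinset u, (G.degree w : ℚ) / G.degree u := by
  have degree_pos {u w : V} (h : G.Adj u w) : (0 : ℚ) < G.degree u :=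
    mod_cast G.degree_pos_iff_exists_adj u |>.mpr ⟨w, h⟩
  suffices ∑ u, ∑ _w ∈ G.neighborFinset u, (2 : ℚ) ≤
      ∑ u, ∑ w ∈ G.neighborFinset u, ((G.degree w : ℚ) / G.degree u + G.degree u / G.degree w) by
    simp only [sum_add_distrib] at this
    rw [← G.sum_sum_neighborFinset_swap (fun u w => (G.degree w : ℚ) / G.degree u)] at this
    simp only [sum_const, card_neighborFinset_eq_degree, nsmul_eq_mul, ← sum_mul] at this
    linarith
  refine sum_le_sum fun u _ => sum_le_sum fun w hw => ?_
  rw [mem_neighborFinset] at hw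
  exact two_le_div_add_div (degree_pos hw.symm) (degree_pos hw)

lemma sum_degree_div_degree_le_sup_degree (u : V) :
    ∑ w ∈ G.neighborFinset u, (G.degree w : ℚ) / G.degree u ≤
      ((G.neighborFinset u).sup (G.degree ·) : ℕ) := by
  rw [← sum_div, ← card_neighborFinset_eq_degree]
  exact sum_div_card_le_sup _ _

end SimpleGraph

theorem stmt_1_general {V : Type*} [Fintype V]
    (G : SimpleGraph V) [DecidableRel G.Adj] :
    ∑ u : V, G.degree u ≤
      ∑ u : V, (G.neighborFinset u).sup (fun w => G.degree w) := by
  have h : ∑ u, (G.degree u : ℚ) ≤ ∑ u, (((G.neighborFinset u).sup (G.degree ·) : ℕ) : ℚ) :=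
    G.sum_degree_le_sum_sum_degree_div.trans
      (sum_le_sum fun u _ => G.sum_degree_div_degree_le_sup_degree u)
  exact_mod_cast h

theorem stmt_1 {V : Type*} [Fintype V] [DecidableEq V]
    (G : SimpleGraph V) [DecidableRel G.Adj] :
    ∑ u : V, G.degree u ≤
      ∑ u : V, (G.neighborFinset u).sup (fun w => G.degree w) :=
  stmt_1_general G
end

section
/- Let G be a finite simple graph and let U be the set of vertices u such that N(u) is nonempty and deg(u) > deg(w) for every neighbor w of u. Then U is an independent set, and there exists a matching in G that saturates every vertex of U (matching each u ∈ U to a distinct neighbor, necessarily outside U). -/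
open Finset

namespace SimpleGraph

variable {V : Type*} {G : SimpleGraph V}

theorem isIndepSet_of_forall_degree_lt [G.LocallyFinite] {S : Set V}
    (h : ∀ u ∈ S, ∀ w, G.Adj u w → G.degree w < G.degree u) : G.IsIndepSet S :=
  fun u hu w hw _ huw => lt_asymm (h u hu w huw) (h w hw u huw.symm)

theorem card_le_card_biUnion_neighborFinset [G.LocallyFinite] [DecidableEq V] {s : Finset V}
    (hpos : ∀ u ∈ s, 0 < G.degree u)
    (hle : ∀ u ∈ s, ∀ w, G.Adj u w → G.degree w ≤ G.degree u) :
    #s ≤ #(s.biUnion fun u => G.neighborFinset u) := by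
  classical
  -- Each `u ∈ s` spreads a unit of mass evenly over its neighbours; a neighbour `w` receives at
  -- most `deg w` shares, each of size at most `1 / deg w`.
  set T := s.biUnion fun u => G.neighborFinset u
  have hswap : ∑ u ∈ s, ∑ w ∈ G.neighborFinset u, ((G.degree u : ℚ))⁻¹ =
      ∑ w ∈ T, ∑ u ∈ s.filter (G.Adj · w), ((G.degree u : ℚ))⁻¹ :=
    sum_comm' fun u w => by
      simp only [T, mem_neighborFinset, mem_filter, mem_biUnion]
      exact ⟨fun ⟨hu, huw⟩ => ⟨⟨hu, huw⟩, u, hu, huw⟩, fun ⟨⟨hu, huw⟩, _⟩ => ⟨hu, huw⟩⟩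
  have hsource : ∀ u ∈ s, ∑ w ∈ G.neighborFinset u, ((G.degree u : ℚ))⁻¹ = 1 := by
    intro u hu
    rw [sum_const, card_neighborFinset_eq_degree, nsmul_eq_mul]
    exact mul_inv_cancel₀ (by exact_mod_cast (hpos u hu).ne')
  have htarget : ∀ w ∈ T, ∑ u ∈ s.filter (G.Adj · w), ((G.degree u : ℚ))⁻¹ ≤ 1 := by
    intro w _
    calc ∑ u ∈ s.filter (G.Adj · w), ((G.degree u : ℚ))⁻¹
        ≤ ∑ u ∈ s.filter (G.Adj · w), ((G.degree w : ℚ))⁻¹ := by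
          refine sum_le_sum fun u hu => ?_
          obtain ⟨hu, huw⟩ := mem_filter.1 hu
          have hw : 0 < G.degree w := G.degree_pos_iff_exists_adj w |>.2 ⟨u, huw.symm⟩
          exact inv_anti₀ (by exact_mod_cast hw) (by exact_mod_cast hle u hu w huw)
      _ ≤ G.degree w * ((G.degree w : ℚ))⁻¹ := by
          rw [sum_const, nsmul_eq_mul, ← card_neighborFinset_eq_degree]
          gcongr
          intro u hu
          exact (G.mem_neighborFinset _ _).2 (mem_filter.1 hu).2.symm
      _ ≤ 1 := mul_inv_le_one
  have key : (#s : ℚ) ≤ #T := by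
    calc (#s : ℚ) = ∑ u ∈ s, ∑ w ∈ G.neighborFinset u, ((G.degree u : ℚ))⁻¹ := by
          rw [sum_congr rfl hsource]; simp
      _ ≤ ∑ _w ∈ T, (1 : ℚ) := hswap ▸ sum_le_sum htarget
      _ = #T := by simp
  exact_mod_cast key

theorem IsIndepSet.exists_isMatching_of_forall_card_le [G.LocallyFinite] [DecidableEq V]
    {S : Set V} (hS : G.IsIndepSet S)
    (hall : ∀ s : Finset V, ↑s ⊆ S → #s ≤ #(s.biUnion fun u => G.neighborFinset u)) :
    ∃ M : G.Subgraph, M.IsMatching ∧ S ⊆ M.verts := by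
  obtain ⟨f, hf_inj, hf_mem⟩ := (all_card_le_biUnion_card_iff_exists_injective
      fun u : S => G.neighborFinset u).1 fun s => by
    simpa [image_biUnion, card_image_of_injective _ Subtype.val_injective] using
      hall (s.image Subtype.val) (by simp)
  have hadj : ∀ u : S, G.Adj u (f u) := fun u => (G.mem_neighborFinset _ _).1 (hf_mem u)
  have hdisj : Disjoint S (Set.range f) := Set.disjoint_right.2 <| by
    rintro _ ⟨u, rfl⟩ hu
    exact hS u.2 hu (hadj u).ne (hadj u)
  obtain ⟨M, hM_verts, hM⟩ :=
    Subgraph.IsMatching.exists_of_disjoint_sets_of_equiv hdisj (.ofInjective f hf_inj) hadj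
  exact ⟨M, hM, hM_verts ▸ Set.subset_union_left⟩

end SimpleGraph

theorem stmt_2 {V : Type*} [Fintype V] [DecidableEq V]
    (G : SimpleGraph V) [DecidableRel G.Adj]
    (U : Set V)
    (hU : U = {u : V | (G.neighborSet u).Nonempty ∧
        ∀ w ∈ G.neighborSet u, G.degree w < G.degree u}) :
    U.Pairwise (fun u w => ¬ G.Adj u w) ∧
      ∃ M : G.Subgraph, M.IsMatching ∧ U ⊆ M.verts := by
  have hdeg : ∀ u ∈ U, ∀ w, G.Adj u w → G.degree w < G.degree u := by
    rw [hU]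
    exact fun u hu => hu.2
  have hpos : ∀ u ∈ U, 0 < G.degree u := by
    rw [hU]
    exact fun u hu => G.degree_pos_iff_exists_adj u |>.2 hu.1
  have hindep : G.IsIndepSet U := SimpleGraph.isIndepSet_of_forall_degree_lt hdeg
  refine ⟨hindep, SimpleGraph.IsIndepSet.exists_isMatching_of_forall_card_le hindep fun s hs => ?_⟩
  exact SimpleGraph.card_le_card_biUnion_neighborFinset (fun u hu => hpos u (hs hu))
    fun u hu w huw => (hdeg u (hs hu) w huw).le
end

section
/- For all real numbers X, Y, Z with 0 ≤ X ≤ 1, 0 ≤ Y ≤ 1, 0 ≤ Z ≤ 1: X + Y + Z + 2√(XY) + 2√(XZ) + 2√(YZ) ≤ 2√X + 2√Y + 2√Z + Z√(XY) + Y√(XZ) + X√(YZ). -/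
/-!
Substituting `a = √X`, `b = √Y`, `c = √Z`, the inequality reads
`(a + b + c)² ≤ (a + b + c) (2 + a b c)`, so it suffices that `a + b + c ≤ 2 + a b c`
on the unit cube, which is `(1 - a)(1 - b c) + (1 - b)(1 - c) ≥ 0`.
-/

lemma add_add_le_two_add_mul_mul {a b c : ℝ} (ha1 : a ≤ 1) (hb1 : b ≤ 1)
    (hc0 : 0 ≤ c) (hc1 : c ≤ 1) : a + b + c ≤ 2 + a * b * c := by
  have hbc : b * c ≤ 1 := mul_le_one₀ hb1 hc0 hc1
  linear_combination mul_nonneg (sub_nonneg.2 ha1) (sub_nonneg.2 hbc)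
    + mul_nonneg (sub_nonneg.2 hb1) (sub_nonneg.2 hc1)

lemma sq_add_add_le_mul_two_add_mul_mul {a b c : ℝ} (ha0 : 0 ≤ a) (ha1 : a ≤ 1)
    (hb0 : 0 ≤ b) (hb1 : b ≤ 1) (hc0 : 0 ≤ c) (hc1 : c ≤ 1) :
    (a + b + c) ^ 2 ≤ (a + b + c) * (2 + a * b * c) := by
  rw [sq]
  exact mul_le_mul_of_nonneg_left (add_add_le_two_add_mul_mul ha1 hb1 hc0 hc1) (by positivity)

theorem stmt_6 (X Y Z : ℝ)
    (hX : 0 ≤ X) (hX1 : X ≤ 1) (hY : 0 ≤ Y) (hY1 : Y ≤ 1) (hZ : 0 ≤ Z) (hZ1 : Z ≤ 1) :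
    X + Y + Z + 2 * Real.sqrt (X * Y) + 2 * Real.sqrt (X * Z) + 2 * Real.sqrt (Y * Z) ≤
      2 * Real.sqrt X + 2 * Real.sqrt Y + 2 * Real.sqrt Z +
        Z * Real.sqrt (X * Y) + Y * Real.sqrt (X * Z) + X * Real.sqrt (Y * Z) := by
  have key := sq_add_add_le_mul_two_add_mul_mul (Real.sqrt_nonneg X) (Real.sqrt_le_one.2 hX1)
    (Real.sqrt_nonneg Y) (Real.sqrt_le_one.2 hY1) (Real.sqrt_nonneg Z) (Real.sqrt_le_one.2 hZ1)
  rw [Real.sqrt_mul hX, Real.sqrt_mul hX, Real.sqrt_mul hY]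
  linear_combination key + (√Y * √Z - 1) * Real.sq_sqrt hX + (√X * √Z - 1) * Real.sq_sqrt hY
    + (√X * √Y - 1) * Real.sq_sqrt hZ
end

section
/- Let X, Y, Z be real numbers in [0,1] satisfying the triangle inequalities X ≤ Y + Z, Y ≤ X + Z, and Z ≤ X + Y. Then 2 − 2√(YZ) + X(√Y + √Z − 2) ≤ (3/2)·[2 − Y − Z + X(√Y + √Z − 1)(√(YZ) − 1)]. -/
/-! With `y = √Y` and `z = √Z` the difference of the two sides is `gap y z X`, a polynomial in
`y, z` that is affine in `X`. The triangle inequalities put `X` between `|Y - Z|` and `1`, so it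
suffices to check the endpoints `X = |y² - z²|` and `X = 1`, which are polynomial inequalities on
the unit square. -/

noncomputable def gap (y z X : ℝ) : ℝ :=
  1 - y * z - 3 / 2 * (y - z) ^ 2 + X * (3 / 2 * (y + z - 1) * (y * z - 1) - (y + z - 2))

lemma gap_comm (y z X : ℝ) : gap y z X = gap z y X := by
  unfold gap; ring

lemma gap_one_nonneg {y z : ℝ} (hy0 : 0 ≤ y) (hy1 : y ≤ 1) (hz0 : 0 ≤ z) (hz1 : z ≤ 1) :
    0 ≤ gap y z 1 := by
  have hu : 0 ≤ 1 - y := by linarith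
  have hv : 0 ≤ 1 - z := by linarith
  unfold gap
  nlinarith [mul_nonneg hu hv, mul_nonneg (mul_nonneg hu hv) hy0,
    mul_nonneg (mul_nonneg hu hv) hz0, mul_nonneg hy0 hz0, sq_nonneg (y - z),
    mul_nonneg (mul_nonneg hu hv) (mul_nonneg hy0 hz0)]

lemma gap_sq_sub_sq_nonneg {y z : ℝ} (hz0 : 0 ≤ z) (hzy : z ≤ y) (hy1 : y ≤ 1) :
    0 ≤ gap y z (y ^ 2 - z ^ 2) := by
  have hu : 0 ≤ 1 - y := by linarith
  have hv : 0 ≤ 1 - z := by linarith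
  have hd : 0 ≤ y - z := by linarith
  have hy0 : 0 ≤ y := by linarith
  unfold gap
  nlinarith [mul_nonneg hu hv, mul_nonneg hy0 hz0, mul_nonneg hd hz0, mul_nonneg hd hu,
    mul_nonneg (mul_nonneg hd hu) hz0, mul_nonneg (mul_nonneg hd hu) hv,
    mul_nonneg (mul_nonneg hu hv) hz0]

lemma add_mul_nonneg_of_endpoints {a c x₀ x₁ x : ℝ} (h₀ : 0 ≤ a + x₀ * c)
    (h₁ : 0 ≤ a + x₁ * c) (hx₀ : x₀ ≤ x) (hx₁ : x ≤ x₁) : 0 ≤ a + x * c := by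
  rcases le_total 0 c with hc | hc
  · nlinarith [mul_le_mul_of_nonneg_right hx₀ hc]
  · nlinarith [mul_le_mul_of_nonpos_right hx₁ hc]

lemma gap_nonneg_of_sq_sub_sq_le_of_le_one {y z : ℝ} (hz0 : 0 ≤ z) (hzy : z ≤ y) (hy1 : y ≤ 1)
    {X : ℝ} (hX : y ^ 2 - z ^ 2 ≤ X) (hX1 : X ≤ 1) : 0 ≤ gap y z X :=
  add_mul_nonneg_of_endpoints (gap_sq_sub_sq_nonneg hz0 hzy hy1)
    (by simpa only [gap, one_mul] using gap_one_nonneg (hz0.trans hzy) hy1 hz0 (hzy.trans hy1)) hX hX1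

lemma gap_nonneg {y z X : ℝ} (hy0 : 0 ≤ y) (hy1 : y ≤ 1) (hz0 : 0 ≤ z) (hz1 : z ≤ 1)
    (hYZ : y ^ 2 ≤ X + z ^ 2) (hZY : z ^ 2 ≤ X + y ^ 2) (hX1 : X ≤ 1) : 0 ≤ gap y z X := by
  rcases le_total z y with hzy | hyz
  · exact gap_nonneg_of_sq_sub_sq_le_of_le_one hz0 hzy hy1 (by linarith) hX1
  · rw [gap_comm]
    exact gap_nonneg_of_sq_sub_sq_le_of_le_one hy0 hyz hz1 (by linarith) hX1

lemma sub_eq_gap_sqrt {Y Z : ℝ} (hY : 0 ≤ Y) (hZ : 0 ≤ Z) (X : ℝ) :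
    (3 / 2) * (2 - Y - Z + X * (√Y + √Z - 1) * (√(Y * Z) - 1))
      - (2 - 2 * √(Y * Z) + X * (√Y + √Z - 2)) = gap √Y √Z X := by
  rw [Real.sqrt_mul hY, gap]
  nth_rewrite 1 [← Real.sq_sqrt hY, ← Real.sq_sqrt hZ]
  ring

theorem stmt_8_general (X Y Z : ℝ)
    (hX1 : X ≤ 1) (hY : 0 ≤ Y) (hY1 : Y ≤ 1) (hZ : 0 ≤ Z) (hZ1 : Z ≤ 1)
    (hYXZ : Y ≤ X + Z) (hZXY : Z ≤ X + Y) :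
    2 - 2 * Real.sqrt (Y * Z) + X * (Real.sqrt Y + Real.sqrt Z - 2) ≤
      (3 / 2) * (2 - Y - Z +
        X * (Real.sqrt Y + Real.sqrt Z - 1) * (Real.sqrt (Y * Z) - 1)) := by
  rw [← sub_nonneg, sub_eq_gap_sqrt hY hZ]
  rw [← Real.sq_sqrt hY, ← Real.sq_sqrt hZ] at hYXZ hZXY
  exact gap_nonneg (Real.sqrt_nonneg Y) (Real.sqrt_le_one.2 hY1) (Real.sqrt_nonneg Z)
    (Real.sqrt_le_one.2 hZ1) hYXZ hZXY hX1

theorem stmt_8 (X Y Z : ℝ)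
    (hX : 0 ≤ X) (hX1 : X ≤ 1) (hY : 0 ≤ Y) (hY1 : Y ≤ 1) (hZ : 0 ≤ Z) (hZ1 : Z ≤ 1)
    (hXYZ : X ≤ Y + Z) (hYXZ : Y ≤ X + Z) (hZXY : Z ≤ X + Y) :
    2 - 2 * Real.sqrt (Y * Z) + X * (Real.sqrt Y + Real.sqrt Z - 2) ≤
      (3 / 2) * (2 - Y - Z +
        X * (Real.sqrt Y + Real.sqrt Z - 1) * (Real.sqrt (Y * Z) - 1)) :=
  stmt_8_general X Y Z hX1 hY hY1 hZ hZ1 hYXZ hZXY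
end

section
/- Let X, Y, Z be real numbers in [0,1] with Y ≤ Z, Z ≤ X + Y, and √Y + √Z ≤ 1. Then 2 − 2√(YZ) + X(√Y + √Z − 2) ≤ 2 − Y − Z + X(√Y + √Z − 1)(√(YZ) − 1). -/
/-! Writing `y = √Y`, `z = √Z`, the difference of the two sides is
`X * (1 + (1 - (y + z)) * (2 - y * z)) - (z - y) ^ 2`, and `(z - y) ^ 2 ≤ z ^ 2 - y ^ 2 = Z - Y ≤ X`. -/

lemma sub_sq_le_sq_sub_sq {y z : ℝ} (hy : 0 ≤ y) (hyz : y ≤ z) : (z - y) ^ 2 ≤ z ^ 2 - y ^ 2 := by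
  nlinarith

lemma le_of_sq_sub_sq_le_of_add_le_one {X y z : ℝ} (hy : 0 ≤ y) (hyz : y ≤ z)
    (hX : z ^ 2 - y ^ 2 ≤ X) (hs : y + z ≤ 1) :
    2 - 2 * (y * z) + X * (y + z - 2) ≤ 2 - y ^ 2 - z ^ 2 + X * (y + z - 1) * (y * z - 1) := by
  have hdiff : (z - y) ^ 2 ≤ X := (sub_sq_le_sq_sub_sq hy hyz).trans hX
  have hp : y * z ≤ 2 := by nlinarith
  have hslack : 0 ≤ X * ((1 - (y + z)) * (2 - y * z)) :=
    mul_nonneg (hdiff.trans' (sq_nonneg _)) (mul_nonneg (by linarith) (by linarith))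
  linear_combination hdiff + hslack

theorem stmt_9_general (X Y Z : ℝ)
    (hY : 0 ≤ Y) (hZ : 0 ≤ Z)
    (hYZ : Y ≤ Z) (hZXY : Z ≤ X + Y)
    (hsqrt : Real.sqrt Y + Real.sqrt Z ≤ 1) :
    2 - 2 * Real.sqrt (Y * Z) + X * (Real.sqrt Y + Real.sqrt Z - 2) ≤
      2 - Y - Z + X * (Real.sqrt Y + Real.sqrt Z - 1) * (Real.sqrt (Y * Z) - 1) := by
  have key := le_of_sq_sub_sq_le_of_add_le_one (X := X) (Real.sqrt_nonneg Y)
    (Real.sqrt_le_sqrt hYZ) (by rw [Real.sq_sqrt hY, Real.sq_sqrt hZ]; linarith) hsqrt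
  rwa [Real.sq_sqrt hY, Real.sq_sqrt hZ, ← Real.sqrt_mul hY] at key

theorem stmt_9 (X Y Z : ℝ)
    (hX : 0 ≤ X) (hX1 : X ≤ 1) (hY : 0 ≤ Y) (hY1 : Y ≤ 1) (hZ : 0 ≤ Z) (hZ1 : Z ≤ 1)
    (hYZ : Y ≤ Z) (hZXY : Z ≤ X + Y)
    (hsqrt : Real.sqrt Y + Real.sqrt Z ≤ 1) :
    2 - 2 * Real.sqrt (Y * Z) + X * (Real.sqrt Y + Real.sqrt Z - 2) ≤
      2 - Y - Z + X * (Real.sqrt Y + Real.sqrt Z - 1) * (Real.sqrt (Y * Z) - 1) :=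
  stmt_9_general X Y Z hY hZ hYZ hZXY hsqrt
end

section
/- For all real numbers Y ∈ (0,1] and X ∈ [0, 1 − Y]: X(11 + 3Y) − X/√Y + 8√Y − 12√(X + Y) < 0. -/
/-! The function is convex in `X`, so it is bounded by its chord between `X = 0` and `X = 1 - Y`;
equivalently, with `s = √Y`, concavity of the square root gives `√(X + s²) ≥ s + X / (s + 1)`, the
chord of `√` between `s²` and `1`. The resulting bound is affine in `X`: it equals `-4s` at `X = 0`,
and at `X = 1 - s²` its sign is that of `-(3s⁵ + 8s³ - 9s² + s + 1)`, which is negative for `s ≥ 0`. -/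

lemma quintic_pos {s : ℝ} (hs : 0 ≤ s) : 0 < 3 * s ^ 5 + 8 * s ^ 3 - 9 * s ^ 2 + s + 1 := by
  nlinarith [sq_nonneg (s - 1), sq_nonneg (2 * s - 1), sq_nonneg (3 * s - 1),
    mul_nonneg hs (sq_nonneg (s - 1)), pow_nonneg hs 3, pow_nonneg hs 5,
    mul_nonneg (mul_nonneg hs hs) (sq_nonneg (s - 1)),
    mul_nonneg (pow_nonneg hs 3) (sq_nonneg (s - 1))]

lemma chord_le_sqrt {a b t : ℝ} (ha : 0 ≤ a) (hb : 0 < b) (hat : a ^ 2 ≤ t) (htb : t ≤ b ^ 2) :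
    a + (t - a ^ 2) / (a + b) ≤ √t := by
  have hat' : a ≤ √t := Real.le_sqrt_of_sq_le hat
  have htb' : √t ≤ b := Real.sqrt_le_iff.mpr ⟨hb.le, htb⟩
  have hsq : √t ^ 2 = t := Real.sq_sqrt ((sq_nonneg a).trans hat)
  have : (t - a ^ 2) / (a + b) ≤ √t - a := by
    rw [div_le_iff₀ (by linarith)]
    nlinarith [mul_le_mul_of_nonneg_left htb' (sub_nonneg.mpr hat')]
  linarith

lemma chord_bound_neg {s X : ℝ} (hs : 0 < s) (hX0 : 0 ≤ X) (hX1 : X ≤ 1 - s ^ 2) :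
    X * (11 + 3 * s ^ 2) - X / s + 8 * s - 12 * (s + X / (s + 1)) < 0 := by
  set c := s * (s + 1) * (11 + 3 * s ^ 2) - (s + 1) - 12 * s
  have hscale : (X * (11 + 3 * s ^ 2) - X / s + 8 * s - 12 * (s + X / (s + 1))) * (s * (s + 1))
      = X * c - 4 * s ^ 2 * (s + 1) := by
    field_simp
    ring
  have hlin : X * c < 4 * s ^ 2 * (s + 1) := by
    rcases le_or_gt c 0 with hc | hc
    · nlinarith [mul_nonpos_of_nonneg_of_nonpos hX0 hc]
    · have hend : (1 - s ^ 2) * c - 4 * s ^ 2 * (s + 1)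
          = -(s + 1) * (3 * s ^ 5 + 8 * s ^ 3 - 9 * s ^ 2 + s + 1) := by ring
      nlinarith [mul_le_mul_of_nonneg_right hX1 hc.le, mul_pos (by linarith : 0 < s + 1) (quintic_pos hs.le)]
  exact neg_of_mul_neg_right (by linarith) (by positivity : (0 : ℝ) ≤ s * (s + 1))

theorem stmt_11_general (X Y : ℝ) (hY0 : 0 < Y)
    (hX0 : 0 ≤ X) (hX1 : X ≤ 1 - Y) :
    X * (11 + 3 * Y) - X / Real.sqrt Y + 8 * Real.sqrt Y - 12 * Real.sqrt (X + Y) < 0 := by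
  obtain ⟨s, hs, rfl⟩ : ∃ s, 0 < s ∧ Y = s ^ 2 := ⟨√Y, Real.sqrt_pos.mpr hY0, (Real.sq_sqrt hY0.le).symm⟩
  rw [Real.sqrt_sq hs.le]
  have hchord := chord_le_sqrt hs.le one_pos (by linarith) (by linarith : X + s ^ 2 ≤ 1 ^ 2)
  rw [add_sub_cancel_right] at hchord
  linarith [chord_bound_neg hs hX0 hX1]

theorem stmt_11 (X Y : ℝ) (hY0 : 0 < Y) (hY1 : Y ≤ 1)
    (hX0 : 0 ≤ X) (hX1 : X ≤ 1 - Y) :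
    X * (11 + 3 * Y) - X / Real.sqrt Y + 8 * Real.sqrt Y - 12 * Real.sqrt (X + Y) < 0 :=
  stmt_11_general X Y hY0 hX0 hX1
end

section
/- Let x, y, z, p, q be nonnegative real numbers with x + y + z + p + q = 1. Set X = x + p, Y = y + p, Z = z + p, and C = 1 − Z. Then p + √C·(2X + 2Y − 2) + (1 − X) + (1 − Y) ≤ 2·[Z·(X + Y − p) + (1 − Y)(1 − (1 − X)√C) + (1 − X)(1 − (1 − Y)√C)]. -/
/-!
Write `s = √C`, so that `Z = 1 - s²`, and let `roundingGap X Y p s` be the right-hand side minus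
the left-hand side. The gap differs from its value at `X = Y = (X + Y) / 2` by `s (X - Y)²`,
and on that diagonal it is linear in `p` and concave in `X`. The constraints `x, y, z, p, q ≥ 0`
confine `(X, p)` to a parallelogram, at whose corners the gap is a polynomial in `s` that is
nonnegative on `[0, 1]` and vanishes only at `s = 1`.
-/

def roundingGap (X Y p s : ℝ) : ℝ :=
  2 * ((1 - s ^ 2) * (X + Y - p) + (1 - Y) * (1 - (1 - X) * s) + (1 - X) * (1 - (1 - Y) * s))
    - (p + s * (2 * X + 2 * Y - 2) + (1 - X) + (1 - Y))

theorem roundingGap_eq_diag_add (X Y p s : ℝ) :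
    roundingGap X Y p s = roundingGap ((X + Y) / 2) ((X + Y) / 2) p s + s * (X - Y) ^ 2 := by
  unfold roundingGap
  ring

theorem roundingGap_diag_nonneg {M p s : ℝ} (hp : 0 ≤ p) (hpM : p ≤ M) (hs0 : 0 ≤ s)
    (hs1 : s ≤ 1) (hMs : 2 * (M - p) ≤ s ^ 2) (hps : p ≤ 1 - s ^ 2) :
    0 ≤ roundingGap M M p s := by
  unfold roundingGap
  nlinarith [mul_nonneg (sub_nonneg.2 hpM) hp, mul_nonneg hs0 (sub_nonneg.2 hpM),
    mul_nonneg hs0 hp, mul_nonneg (sub_nonneg.2 hs1) hp, mul_nonneg hs0 (sub_nonneg.2 hMs),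
    mul_nonneg hs0 (sub_nonneg.2 hps), mul_nonneg (mul_nonneg hs0 hp) (sub_nonneg.2 hs1),
    sq_nonneg (1 - s)]

theorem roundingGap_nonneg {X Y p s : ℝ} (hp : 0 ≤ p) (hpX : p ≤ X) (hpY : p ≤ Y)
    (hs0 : 0 ≤ s) (hs1 : s ≤ 1) (hXYs : X + Y - 2 * p ≤ s ^ 2) (hps : p ≤ 1 - s ^ 2) :
    0 ≤ roundingGap X Y p s := by
  rw [roundingGap_eq_diag_add]
  have hdiag : 0 ≤ roundingGap ((X + Y) / 2) ((X + Y) / 2) p s :=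
    roundingGap_diag_nonneg hp (by linarith) hs0 hs1 (by linarith) hps
  exact add_nonneg hdiag (mul_nonneg hs0 (sq_nonneg _))

theorem stmt_12 (x y z p q : ℝ)
    (hx : 0 ≤ x) (hy : 0 ≤ y) (hz : 0 ≤ z) (hp : 0 ≤ p) (hq : 0 ≤ q)
    (hsum : x + y + z + p + q = 1)
    (X Y Z C : ℝ)
    (hX : X = x + p) (hY : Y = y + p) (hZ : Z = z + p) (hC : C = 1 - Z) :
    p + Real.sqrt C * (2 * X + 2 * Y - 2) + (1 - X) + (1 - Y) ≤
      2 * (Z * (X + Y - p) +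
        (1 - Y) * (1 - (1 - X) * Real.sqrt C) +
        (1 - X) * (1 - (1 - Y) * Real.sqrt C)) := by
  subst hX hY hZ hC
  have hs0 : 0 ≤ √(1 - (z + p)) := Real.sqrt_nonneg _
  have hs1 : √(1 - (z + p)) ≤ 1 := Real.sqrt_le_one.mpr (by linarith)
  have hs2 : √(1 - (z + p)) ^ 2 = 1 - (z + p) := Real.sq_sqrt (by linarith)
  have hgap := roundingGap_nonneg (X := x + p) (Y := y + p) hp (by linarith) (by linarith)
    hs0 hs1 (by linarith) (by linarith)
  rw [roundingGap, hs2] at hgap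
  linear_combination hgap
end

section
/- For every real number p with 0 ≤ p ≤ 1: 1 − (1 − p)^{5/2} − 2p·√(1 − p) ≥ 0. Equivalently, 2p√(1 − p) + 1 ≤ 2·(1 − (1 − p)²·√(1 − p)/2). -/
/-! Substituting `s = √(1 - p)`, so that `p = 1 - s²` and `(1 - p)^{5/2} = s⁵`, both claims become
`1 - 2s + 2s³ - s⁵ ≥ 0`, which holds for every `s ≤ 1` because the polynomial factors as
`(1 - s) ((s² + s/2 - 1)² + 3s²/4)`. -/

lemma one_sub_two_mul_add_two_mul_pow_three_sub_pow_five_nonneg {s : ℝ} (hs : s ≤ 1) :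
    0 ≤ 1 - 2 * s + 2 * s ^ 3 - s ^ 5 := by
  have hfactor : 1 - 2 * s + 2 * s ^ 3 - s ^ 5 =
      (1 - s) * ((s ^ 2 + s / 2 - 1) ^ 2 + 3 / 4 * s ^ 2) := by ring
  rw [hfactor]
  exact mul_nonneg (by linarith) (by positivity)

lemma Real.rpow_five_div_two_eq_sqrt_pow {x : ℝ} (hx : 0 ≤ x) :
    x ^ ((5 : ℝ) / 2) = Real.sqrt x ^ 5 := by
  rw [Real.sqrt_eq_rpow, ← Real.rpow_natCast, ← Real.rpow_mul hx]
  norm_num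

theorem stmt_13 (p : ℝ) (hp : 0 ≤ p) (hp1 : p ≤ 1) :
    1 - (1 - p) ^ ((5 : ℝ) / 2) - 2 * p * Real.sqrt (1 - p) ≥ 0 ∧
    2 * p * Real.sqrt (1 - p) + 1 ≤
      2 * (1 - (1 - p) ^ 2 * Real.sqrt (1 - p) / 2) := by
  rw [Real.rpow_five_div_two_eq_sqrt_pow (by linarith)]
  set s := Real.sqrt (1 - p)
  have hs_sq : s ^ 2 = 1 - p := Real.sq_sqrt (by linarith)
  have hs_le_one : s ≤ 1 := Real.sqrt_le_one.mpr (by linarith)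
  have key := one_sub_two_mul_add_two_mul_pow_three_sub_pow_five_nonneg hs_le_one
  refine ⟨?_, ?_⟩
  · linear_combination key + 2 * s * hs_sq
  · rw [← hs_sq]
    linear_combination key + 2 * s * hs_sq
end

section
/- For every real number p with 0 ≤ p ≤ 1: √(1 − p)·(4p − 2) + 2 − p ≤ 1.76·(p² + 2 − 2p − 2(1 − p)²·√(1 − p)). -/
/-!
Substituting `s = √(1 - p)`, so that `p = 1 - s²` with `s ∈ [0, 1]`, turns the claim into the
polynomial inequality `(1 - s) (88 s⁴ + 44 s³ - 56 s² - 31 s + 19) ≥ 0`. The quartic factor is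
positive on all of `ℝ`, but only barely: its minimum, about `0.33`, lies near `s ≈ 0.533`,
i.e. `p ≈ 0.716`, where the constant `1.76` is nearly attained.
-/

theorem quartic_pos (s : ℝ) : 0 < 88 * s ^ 4 + 44 * s ^ 3 - 56 * s ^ 2 - 31 * s + 19 := by
  nlinarith [sq_nonneg (s - 0.535), sq_nonneg (s * (s - 0.535)), sq_nonneg (s ^ 2 - 0.286),
    sq_nonneg (s ^ 2 + 0.25 * s - 0.4)]

theorem poly_le_of_le_one {s : ℝ} (hs : s ≤ 1) :
    -4 * s ^ 3 + s ^ 2 + 2 * s + 1 ≤ 1.76 * (1 + s ^ 4 - 2 * s ^ 5) := by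
  linear_combination (1 / 25 : ℝ) * mul_nonneg (sub_nonneg.2 hs) (quartic_pos s).le

theorem stmt_14 (p : ℝ) (hp : 0 ≤ p) (hp1 : p ≤ 1) :
    Real.sqrt (1 - p) * (4 * p - 2) + 2 - p ≤
      1.76 * (p ^ 2 + 2 - 2 * p - 2 * (1 - p) ^ 2 * Real.sqrt (1 - p)) := by
  obtain ⟨s, hs0, hs1, rfl⟩ : ∃ s, 0 ≤ s ∧ s ≤ 1 ∧ p = 1 - s ^ 2 :=
    ⟨√(1 - p), Real.sqrt_nonneg _, Real.sqrt_le_one.2 (by linarith),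
      by rw [Real.sq_sqrt (by linarith)]; ring⟩
  rw [show 1 - (1 - s ^ 2) = s ^ 2 by ring, Real.sqrt_sq hs0]
  linear_combination poly_le_of_le_one hs1
end

section
/- Let x, y, z be real numbers with 0 ≤ x ≤ 0.1, 0 ≤ y ≤ 0.1, 0 ≤ z ≤ 0.1, satisfying the triangle inequalities x ≤ y + z, y ≤ x + z, z ≤ x + y. Then 20(x² + y² + z²) − 200(x²y² + y²z² + z²x²) ≤ 1.9·[x(1 − 100y²z²) + y(1 − 100x²z²) + z(1 − 100x²y²)]. -/
/-!
Since `x * (1 - 100 * y ^ 2 * z ^ 2) + … = (x + y + z) - 100 * x * y * z * (x * y + y * z + z * x)`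
and each pairwise product is at most `0.01`, the correction term costs at most `5.7 * x * y * z`
after multiplying by `1.9`.
What remains is the nonnegativity of the quartic
`1.9 * (x + y + z) - 20 * (x ^ 2 + y ^ 2 + z ^ 2) + 200 * (x ^ 2 * y ^ 2 + …) - 5.7 * x * y * z`.
On `[0, 0.1] ^ 3` its Hessian is diagonally dominant with diagonal at most `-32`, so it is concave,
and the region cut out by the triangle inequalities is the polytope with vertices `0`,
`(0.1, 0.1, 0.1)` and the permutations of `(0.1, 0.1, 0)`, where the quartic is `0`, `0.0243` and `0`.
-/

theorem mul_add_mul_add_mul_le_three_mul_sq {α : Type*} [CommSemiring α] [PartialOrder α]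
    [IsOrderedRing α] {x y z d : α} (hx0 : 0 ≤ x) (hx : x ≤ d) (hy0 : 0 ≤ y) (hy : y ≤ d)
    (hz0 : 0 ≤ z) (hz : z ≤ d) : x * y + y * z + z * x ≤ 3 * d ^ 2 := by
  have hd : 0 ≤ d := hx0.trans hx
  calc x * y + y * z + z * x ≤ d * d + d * d + d * d := by gcongr
    _ = 3 * d ^ 2 := by ring

theorem cost_add_le_of_triangle {x y z : ℝ} (hx0 : 0 ≤ x) (hx1 : x ≤ 0.1) (hy0 : 0 ≤ y)
    (hy1 : y ≤ 0.1) (hz0 : 0 ≤ z) (hz1 : z ≤ 0.1)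
    (hxyz : x ≤ y + z) (hyxz : y ≤ x + z) (hzxy : z ≤ x + y) :
    20 * (x ^ 2 + y ^ 2 + z ^ 2) - 200 * (x ^ 2 * y ^ 2 + y ^ 2 * z ^ 2 + z ^ 2 * x ^ 2)
      + 5.7 * (x * y * z) ≤ 1.9 * (x + y + z) := by
  nlinarith [mul_nonneg (mul_nonneg (sub_nonneg.2 hx1) hx0) (sub_nonneg.2 hxyz),
    mul_nonneg (mul_nonneg (sub_nonneg.2 hy1) hy0) (sub_nonneg.2 hyxz),
    mul_nonneg (mul_nonneg (sub_nonneg.2 hz1) hz0) (sub_nonneg.2 hzxy),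
    mul_nonneg (sub_nonneg.2 hx1) (sub_nonneg.2 hy1),
    mul_nonneg (sub_nonneg.2 hy1) (sub_nonneg.2 hz1),
    mul_nonneg (sub_nonneg.2 hx1) (sub_nonneg.2 hz1),
    mul_nonneg (mul_nonneg hx0 hy0) hz0]

theorem stmt_15 (x y z : ℝ)
    (hx0 : 0 ≤ x) (hx1 : x ≤ 0.1) (hy0 : 0 ≤ y) (hy1 : y ≤ 0.1)
    (hz0 : 0 ≤ z) (hz1 : z ≤ 0.1)
    (hxyz : x ≤ y + z) (hyxz : y ≤ x + z) (hzxy : z ≤ x + y) :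
    20 * (x ^ 2 + y ^ 2 + z ^ 2) -
        200 * (x ^ 2 * y ^ 2 + y ^ 2 * z ^ 2 + z ^ 2 * x ^ 2) ≤
      1.9 * (x * (1 - 100 * y ^ 2 * z ^ 2) + y * (1 - 100 * x ^ 2 * z ^ 2) +
        z * (1 - 100 * x ^ 2 * y ^ 2)) := by
  have hcorrection : x * y * z * (x * y + y * z + z * x) ≤ x * y * z * (3 * 0.1 ^ 2) :=
    mul_le_mul_of_nonneg_left (mul_add_mul_add_mul_le_three_mul_sq hx0 hx1 hy0 hy1 hz0 hz1)
      (by positivity)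
  linear_combination
    cost_add_le_of_triangle hx0 hx1 hy0 hy1 hz0 hz1 hxyz hyxz hzxy + 190 * hcorrection
end

section
/- For every real number z with 0 ≤ z ≤ 0.2: 2√z − 10·z^{5/2} + 1.01 ≤ 1.9·(z·(1 − 0.1·√z) + 0.99·(1 − z)). -/
/-- With `s = √z` the claim becomes `10 s⁵ - 0.19 s³ + 0.019 s² - 2 s + 0.871 ≥ 0`; this quintic
is decreasing on `[0, √0.2]` and is still about `0.14` at the right endpoint. -/
theorem quintic_bound_of_sq_le (s : ℝ) (hs : 0 ≤ s) (hs2 : s ^ 2 ≤ 0.2) :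
    2 * s - 10 * s ^ 5 + 1.01 ≤ 1.9 * (s ^ 2 * (1 - 0.1 * s) + 0.99 * (1 - s ^ 2)) := by
  nlinarith [mul_nonneg hs (sub_nonneg.2 hs2), mul_nonneg (pow_nonneg hs 3) (sub_nonneg.2 hs2),
    sq_nonneg (s - 0.4)]

theorem stmt_19 (z : ℝ) (hz0 : 0 ≤ z) (hz1 : z ≤ 0.2) :
    2 * Real.sqrt z - 10 * z ^ ((5 : ℝ) / 2) + 1.01 ≤
      1.9 * (z * (1 - 0.1 * Real.sqrt z) + 0.99 * (1 - z)) := by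
  have h := quintic_bound_of_sq_le (Real.sqrt z) (Real.sqrt_nonneg z) (by rwa [Real.sq_sqrt hz0])
  rwa [Real.sq_sqrt hz0, ← Real.rpow_ofNat, ← Real.rpow_div_two_eq_sqrt _ hz0] at h
end
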